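/- arXiv:2305.16747 — 2 statements merged into one kernel-verified Lean document; each statement's English description precedes it below -/
import Mathlib

section
/- Let R be a commutative ring and d : R → R a derivation. Let P = (P_1,…,P_m) be an m-tuple of polynomials in R[x_1,…,x_n] and Q = (Q_1,…,Q_r) an r-tuple of polynomials in R[y_1,…,y_m], and let Q∘P denote the r-tuple of polynomials in R[x_1,…,x_n] obtained by substituting P_j for y_j in each Q_l. For an m-tuple P define the prolongation map τP : R^n × R^n → R^m × R^m by τP(a,u) = ( P(a), JP(a)·u + P^d(a) ), where JP(a) is the Jacobian matrix of formal partial derivatives of P evaluated at a, JP(a)·u is matrix–vector multiplication, and P^d(a) = (P_1^d(a),…,P_m^d(a)). Then for all a, u ∈ R^n, τ(Q∘P)(a,u) = τQ( τP(a,u) ). -/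
open MvPolynomial

/-- `coeffD d p` is the polynomial `p^d` obtained from `p` by applying `d` to each
coefficient. -/
noncomputable def coeffD {R : Type*} [CommRing R] {σ : Type*} (d : R → R)
    (p : MvPolynomial σ R) : MvPolynomial σ R :=
  ∑ s ∈ p.support, monomial s (d (coeff s p))

/-- The prolongation `τP : R^n × R^n → R^m × R^m` of an `m`-tuple `P` of polynomials
in `n` variables: `τP(a,u) = (P(a), JP(a)·u + P^d(a))`, where `JP(a)` is the Jacobian
of formal partial derivatives evaluated at `a`. -/
noncomputable def tauPoly {R : Type*} [CommRing R] {n m : ℕ} (d : R → R)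
    (P : Fin m → MvPolynomial (Fin n) R) :
    (Fin n → R) × (Fin n → R) → (Fin m → R) × (Fin m → R) :=
  fun au =>
    (fun j => eval au.1 (P j),
     fun j => (∑ i, eval au.1 (pderiv i (P j)) * au.2 i) + eval au.1 (coeffD d (P j)))

/-! A derivation `d` of `R` is the same thing as a ring homomorphism `R → R[ε]`,
`r ↦ r + d(r) ε`, into the dual numbers. Evaluating `p` at `a + u ε` through this homomorphism
gives, by Taylor expansion, `p(a) + (Jp(a) u + p^d(a)) ε`, so `τP` is evaluation of `P` at dual
points; the chain rule is then associativity of substitution, `eval₂Hom_bind₁`. -/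

open TrivSqZeroExt

section

variable {R : Type*} [CommRing R] {σ : Type*} {d : R → R}

section Additive

variable (hadd : ∀ x y, d (x + y) = d x + d y)
include hadd

theorem map_zero_of_add : d 0 = 0 := by
  simpa using (hadd 0 0).symm

theorem coeff_coeffD (p : MvPolynomial σ R) (t : σ →₀ ℕ) :
    coeff t (coeffD d p) = d (coeff t p) := by
  classical
  simp only [coeffD, coeff_sum, coeff_monomial, Finset.sum_ite_eq', mem_support_iff]
  split_ifs with h
  · rfl
  · rw [not_not.mp h, map_zero_of_add hadd]

theorem coeffD_add (p q : MvPolynomial σ R) :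
    coeffD d (p + q) = coeffD d p + coeffD d q := by
  ext t
  simp only [coeff_add, coeff_coeffD hadd, hadd]

theorem coeffD_C (r : R) : coeffD d (C r : MvPolynomial σ R) = C (d r) := by
  classical
  ext t
  rw [coeff_coeffD hadd, coeff_C, coeff_C, apply_ite d, map_zero_of_add hadd]

theorem coeffD_mul_X (p : MvPolynomial σ R) (i : σ) :
    coeffD d (p * X i) = coeffD d p * X i := by
  classical
  ext t
  rw [coeff_coeffD hadd, coeff_mul_X', coeff_mul_X', apply_ite d, map_zero_of_add hadd,
    coeff_coeffD hadd]

end Additive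

theorem map_one_of_leibniz (hmul : ∀ x y, d (x * y) = d x * y + x * d y) : d 1 = 0 := by
  simpa using (hmul 1 1).symm

noncomputable def dualNumberHomOfDerivation (hadd : ∀ x y, d (x + y) = d x + d y)
    (hmul : ∀ x y, d (x * y) = d x * y + x * d y) : R →+* DualNumber R where
  toFun r := inl r + inr (d r)
  map_one' := by ext <;> simp [map_one_of_leibniz hmul]
  map_mul' x y := by ext <;> simp [hmul, add_comm]
  map_zero' := by ext <;> simp [map_zero_of_add hadd]
  map_add' x y := by ext <;> simp [hadd]

section Prolongation

variable (hadd : ∀ x y, d (x + y) = d x + d y) (hmul : ∀ x y, d (x * y) = d x * y + x * d y)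

theorem eval₂_dualNumberHomOfDerivation [Fintype σ] (x : σ → DualNumber R)
    (p : MvPolynomial σ R) :
    eval₂ (dualNumberHomOfDerivation hadd hmul) x p =
      inl (eval (fun i => (x i).fst) p) +
        inr ((∑ i, eval (fun i => (x i).fst) (pderiv i p) * (x i).snd) +
          eval (fun i => (x i).fst) (coeffD d p)) := by
  classical
  set a := fun i => (x i).fst
  induction p using MvPolynomial.induction_on with
  | C r => simp [dualNumberHomOfDerivation, coeffD_C hadd]
  | add p q hp hq =>
    rw [eval₂_add, hp, hq, coeffD_add hadd]
    simp only [map_add, add_mul, Finset.sum_add_distrib, inl_add, inr_add]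
    abel
  | mul_X p i hp =>
    have hderiv : ∑ j, eval a (pderiv j (p * X i)) * (x j).snd =
        (∑ j, eval a (pderiv j p) * (x j).snd) * a i + eval a p * (x i).snd := by
      simp only [Derivation.leibniz, pderiv_X, smul_eq_mul, map_add, map_mul, eval_X, add_mul,
        Finset.sum_add_distrib]
      simp only [Pi.single_apply, apply_ite (eval a), map_one, map_zero, mul_ite, mul_one,
        mul_zero, ite_mul, zero_mul, Finset.sum_ite_eq, Finset.mem_univ, if_true, Finset.sum_mul]
      ring_nf
    rw [eval₂_mul, hp, eval₂_X, coeffD_mul_X hadd, hderiv]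
    ext
    · simp [a]
    · simp [a]; ring

theorem tauPoly_eq_eval₂ {n m : ℕ} (P : Fin m → MvPolynomial (Fin n) R)
    (x : Fin n → DualNumber R) :
    tauPoly d P (fun i => (x i).fst, fun i => (x i).snd) =
      (fun j => (eval₂ (dualNumberHomOfDerivation hadd hmul) x (P j)).fst,
        fun j => (eval₂ (dualNumberHomOfDerivation hadd hmul) x (P j)).snd) := by
  simp [tauPoly, eval₂_dualNumberHomOfDerivation hadd hmul]

end Prolongation

end

/-- Chain rule for prolongations of polynomial maps: `τ(Q ∘ P) = τQ ∘ τP`, where the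
composite tuple `Q ∘ P` is obtained by substituting `P_j` for `y_j` in each `Q_l`. -/
theorem tauPoly_comp {R : Type*} [CommRing R] {n m r : ℕ} (d : R → R)
    (hadd : ∀ x y, d (x + y) = d x + d y)
    (hmul : ∀ x y, d (x * y) = d x * y + x * d y)
    (P : Fin m → MvPolynomial (Fin n) R) (Q : Fin r → MvPolynomial (Fin m) R)
    (a u : Fin n → R) :
    tauPoly d (fun l => bind₁ P (Q l)) (a, u) = tauPoly d Q (tauPoly d P (a, u)) := by
  set x : Fin n → DualNumber R := fun i => inl (a i) + inr (u i)
  have hx : (a, u) = (fun i => (x i).fst, fun i => (x i).snd) := by simp [x]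
  rw [hx, tauPoly_eq_eval₂ hadd hmul, tauPoly_eq_eval₂ hadd hmul, tauPoly_eq_eval₂ hadd hmul]
  simp only [← coe_eval₂Hom, eval₂Hom_bind₁]
end

section
/- Let p be a prime and work over the field ℚ_p of p-adic numbers with its standard norm; equip ℚ_p^k with the sup norm ‖x‖ = max_i ‖x_i‖ and matrices with entrywise sup norm. Let b ∈ ℚ_p^n, let g : ℚ_p^m × ℚ_p^n → ℚ_p^r be a function, and let A : ℚ_p^n → M_{r×m}(ℚ_p) be a matrix-valued function continuous at b. Assume that for every real ε > 0 there exists δ > 0 such that for all x ∈ ℚ_p^m and y ∈ ℚ_p^n with ‖x‖ < δ and ‖y − b‖ < δ one has ‖g(x,y) − A(y)·x‖ ≤ ε·‖x‖. Then for every real ε > 0 there exists δ > 0 such that for all (x,y) with max(‖x‖, ‖y − b‖) < δ one has ‖g(x,y) − A(b)·x‖ ≤ ε·max(‖x‖, ‖y − b‖); in other words, g is differentiable at (0,b) with derivative (x,y) ↦ A(b)·x. -/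
/-!
Split `g (x, y) - A b *ᵥ x = (g (x, y) - A y *ᵥ x) + (A y - A b) *ᵥ x`. The hypothesis says the
first term is `o(‖x‖)` uniformly in `y` near `b`; the second is bounded by `‖A y - A b‖ * ‖x‖`
(ℓ∞ operator norm), and `‖A y - A b‖ → 0` by continuity. So the sum is `o(‖x‖)`, a fortiori
`o(max ‖x‖ ‖y - b‖)`.
-/

open Matrix Asymptotics Filter Topology

theorem isLittleO_nhds_zero_prod_iff {E Y F G : Type*} [SeminormedAddCommGroup E]
    [SeminormedAddCommGroup Y] [Norm F] [Norm G] {f : E × Y → F} {g : E × Y → G} {b : Y} :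
    f =o[𝓝 (0, b)] g ↔ ∀ ε : ℝ, 0 < ε → ∃ δ : ℝ, 0 < δ ∧
      ∀ x y, max ‖x‖ ‖y - b‖ < δ → ‖f (x, y)‖ ≤ ε * ‖g (x, y)‖ := by
  simp only [isLittleO_iff, Metric.eventually_nhds_iff, Prod.forall, dist_eq_norm,
    Prod.mk_sub_mk, sub_zero, Prod.norm_mk, gt_iff_lt]

section LinftyOp

attribute [local instance] Matrix.linftyOpSeminormedAddCommGroup

theorem Matrix.isLittleO_mulVec_of_tendsto_zero {α ι m n : Type*} [SeminormedRing α]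
    [Fintype m] [Fintype n] {l : Filter ι} {M : ι → Matrix m n α} {v : ι → n → α}
    (hM : Tendsto M l (𝓝 0)) : (fun i => M i *ᵥ v i) =o[l] v := by
  refine isLittleO_iff.2 fun c hc => ?_
  filter_upwards [(tendsto_zero_iff_norm_tendsto_zero.1 hM).eventually (ge_mem_nhds hc)]
    with i hi
  exact (linfty_opNorm_mulVec _ _).trans (mul_le_mul_of_nonneg_right hi (norm_nonneg _))

theorem Matrix.isLittleO_sub_mulVec_of_continuousAt {α Y m n : Type*} [SeminormedRing α]
    [TopologicalSpace Y] [Fintype m] [Fintype n]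
    {A : Y → Matrix m n α} {b : Y} (hA : ContinuousAt A b) (e : n → α) :
    (fun z : (n → α) × Y => (A z.2 - A b) *ᵥ z.1) =o[𝓝 (e, b)] Prod.fst :=
  isLittleO_mulVec_of_tendsto_zero <| by
    simpa using (hA.tendsto.comp (continuousAt_snd (p := (e, b)))).sub_const (A b)

end LinftyOp

/-- p-adic differentiability of a function of two blocks of variables at `(0, b)`:
if `g` satisfies `‖g(x,y) − A(y)·x‖ ≤ ε‖x‖` for `‖x‖, ‖y − b‖` small, where the
matrix-valued map `A` is continuous at `b` (entrywise), then `g` is differentiable at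
`(0,b)` with derivative `(x,y) ↦ A(b)·x`: for every `ε > 0` there is `δ > 0` such
that `max(‖x‖, ‖y−b‖) < δ` implies `‖g(x,y) − A(b)·x‖ ≤ ε·max(‖x‖, ‖y−b‖)`.
Here `ℚ_p^k` carries the sup norm. -/
theorem padic_differentiable_at_generic (p : ℕ) [Fact p.Prime] {m n r : ℕ}
    (b : Fin n → ℚ_[p])
    (g : (Fin m → ℚ_[p]) × (Fin n → ℚ_[p]) → Fin r → ℚ_[p])
    (A : (Fin n → ℚ_[p]) → Matrix (Fin r) (Fin m) ℚ_[p])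
    (hA : ∀ i j, ContinuousAt (fun y => A y i j) b)
    (hg : ∀ ε : ℝ, 0 < ε → ∃ δ : ℝ, 0 < δ ∧
      ∀ (x : Fin m → ℚ_[p]) (y : Fin n → ℚ_[p]), ‖x‖ < δ → ‖y - b‖ < δ →
        ‖g (x, y) - A y *ᵥ x‖ ≤ ε * ‖x‖) :
    ∀ ε : ℝ, 0 < ε → ∃ δ : ℝ, 0 < δ ∧
      ∀ (x : Fin m → ℚ_[p]) (y : Fin n → ℚ_[p]), max ‖x‖ ‖y - b‖ < δ →
        ‖g (x, y) - A b *ᵥ x‖ ≤ ε * max ‖x‖ ‖y - b‖ := by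
  have h_uniform : (fun z => g z - A z.2 *ᵥ z.1) =o[𝓝 (0, b)] Prod.fst :=
    isLittleO_nhds_zero_prod_iff.2 fun ε hε => by
      obtain ⟨δ, hδ, h⟩ := hg ε hε
      exact ⟨δ, hδ, fun x y hxy => h x y (max_lt_iff.1 hxy).1 (max_lt_iff.1 hxy).2⟩
  have h_vary := isLittleO_sub_mulVec_of_continuousAt
    (continuousAt_pi.2 fun i => continuousAt_pi.2 (hA i)) (0 : Fin m → ℚ_[p])
  have h_fst : (Prod.fst : _ → Fin m → ℚ_[p]) =O[𝓝 (0, b)] fun z => (z.1, z.2 - b) :=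
    isBigO_fst_prod
  simpa only [sub_mulVec, sub_add_sub_cancel, Prod.norm_mk] using
    isLittleO_nhds_zero_prod_iff.1 ((h_uniform.add h_vary).trans_isBigO h_fst)
end
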